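/- arXiv:math-ph/0311049 — 4 statements merged into one kernel-verified Lean document; each statement's English description precedes it below -/
import Mathlib

section
/- For every integer d ≥ 1, every finite nonempty Λ ⊂ ℤ^d, and every integer 0 ≤ N ≤ |Λ|, the sum of the N lowest eigenvalues of the discrete Laplacian satisfies S_{Λ,N} ≥ e(N/|Λ|)·|Λ|. -/
open scoped BigOperators

noncomputable section

/-- `ℓ¹` distance on `ℤ^d`. -/

def dist1 (d : ℕ) (x y : Fin d → ℤ) : ℕ := ∑ i, (x i - y i).natAbs

/-- Lattice dispersion relation `ε_k = 2d − 2 Σᵢ cos kᵢ`. -/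

def epsk (d : ℕ) (k : Fin d → ℝ) : ℝ := 2 * d - 2 * ∑ i, Real.cos (k i)

/-- `k` belongs to the Brillouin zone `[−π, π]^d`. -/

def inBZ (d : ℕ) (k : Fin d → ℝ) : Prop := ∀ i, |k i| ≤ Real.pi

/-- Volume of `{k ∈ [−π,π]^d : ε_k < E}`. -/

def volBelow (d : ℕ) (E : ℝ) : ℝ :=
  (MeasureTheory.volume {k : Fin d → ℝ | inBZ d k ∧ epsk d k < E}).toReal

/-- The Fermi level `ε_F(ρ)`, defined by `ρ = (2π)^{−d}·vol{k ∈ [−π,π]^d : ε_k < ε_F(ρ)}`. -/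

def fermiLevel (d : ℕ) (ρ : ℝ) : ℝ :=
  sInf {E : ℝ | ρ ≤ volBelow d E / (2 * Real.pi) ^ d}

/-- Ground-state energy per site of free lattice fermions at density `ρ`:
`e(ρ) = (2π)^{−d} ∫_{ε_k < ε_F(ρ)} ε_k dk`. -/

def enGS (d : ℕ) (ρ : ℝ) : ℝ :=
  (∫ k in {k : Fin d → ℝ | inBZ d k ∧ epsk d k < fermiLevel d ρ}, epsk d k) /
    (2 * Real.pi) ^ d

/-- `ξ(ρ) = ρ·ε_F(ρ) − e(ρ)`. -/

def xiFun (d : ℕ) (ρ : ℝ) : ℝ := ρ * fermiLevel d ρ - enGS d ρ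

/-- The `2d` unit lattice vectors of `ℤ^d`, indexed by a coordinate and a sign. -/

def unitVec (d : ℕ) (p : Fin d × Bool) : Fin d → ℤ :=
  fun j => if j = p.1 then (if p.2 then 1 else -1) else 0

/-- `B(Λ)`: the number of bonds `(x, y)` with `x ∈ Λ`, `y ∉ Λ`, `|x − y|₁ = 1`. -/

def bonds (d : ℕ) (Λ : Finset (Fin d → ℤ)) : ℕ :=
  ∑ x ∈ Λ, (Finset.univ.filter fun p : Fin d × Bool => x + unitVec d p ∉ Λ).card

/-- The discrete Laplacian `h_Λ` as a matrix:
`(h_Λ φ)(x) = −Σ_{y∈Λ, |y−x|₁=1} φ(y) + 2d·φ(x)`. -/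

def lapMatrix (d : ℕ) (Λ : Finset (Fin d → ℤ)) : Matrix Λ Λ ℂ :=
  fun x y => if dist1 d x y = 1 then -1 else if x = y then (2 * d : ℂ) else 0

/-- The discrete Laplacian is Hermitian. -/

theorem lapMatrix_isHermitian (d : ℕ) (Λ : Finset (Fin d → ℤ)) :
    (lapMatrix d Λ).IsHermitian := by
  ext x y
  have hsymm : dist1 d (y : Fin d → ℤ) x = dist1 d x y := by
    unfold dist1
    exact Finset.sum_congr rfl fun i _ => by rw [← Int.natAbs_neg, neg_sub]
  simp only [Matrix.conjTranspose_apply, lapMatrix, hsymm]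
  by_cases h1 : dist1 d (x : Fin d → ℤ) (y : Fin d → ℤ) = 1 <;>
    by_cases h2 : x = y <;>
      simp [h1, h2, eq_comm, apply_ite (starRingEnd ℂ), Complex.conj_ofNat]

/-- `S_{Λ,N}`: the sum of the `N` lowest eigenvalues of `h_Λ` (with multiplicity). -/

def lowSum (d : ℕ) (Λ : Finset (Fin d → ℤ)) (N : ℕ) : ℝ :=
  ((Multiset.sort
      (Finset.univ.val.map (lapMatrix_isHermitian d Λ).eigenvalues) (· ≤ ·)).take N).sum

/-- The minimal surface energy
`a(ρ) = inf_Λ [S_{Λ, ρ|Λ|} − e(ρ)|Λ|]/B(Λ)`, the infimum running over all finite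
nonempty `Λ ⊂ ℤ^d` such that `ρ|Λ|` is an integer. -/

def aSurf (d : ℕ) (ρ : ℚ) : ℝ :=
  sInf {r : ℝ | ∃ (Λ : Finset (Fin d → ℤ)) (N : ℕ), Λ.Nonempty ∧
    (N : ℚ) = ρ * Λ.card ∧ r = (lowSum d Λ N - enGS d (ρ : ℝ) * Λ.card) / bonds d Λ}

end

/-
Let `u x` be an orthonormal eigenbasis of `h_Λ` and `T` the indices of the `N` lowest
eigenvalues. Viewing each `u x` as a function on `ℤ^d` and taking its Fourier series
`û x (k) = Σ_y u x y e^{i k·y}` on the Brillouin zone, the momentum density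
`M(k) = Σ_{x ∈ T} |û x (k)|²` satisfies `0 ≤ M ≤ |Λ|` (Bessel's inequality against the plane
wave `(e^{-i k·y})_{y ∈ Λ}`), `∫ M = (2π)^d N` (Parseval) and `∫ ε_k M(k) dk = (2π)^d S_{Λ,N}`,
because `ε_k` is the symbol of the lattice Laplacian. By the bathtub principle, among all such
densities the energy `∫ ε M` is smallest for the filled Fermi sea `|Λ| · 1{ε_k < ε_F(ρ)}`,
whose energy is `(2π)^d e(ρ) |Λ|`.
-/

noncomputable section

open MeasureTheory Complex Finset Matrix
open scoped Real ComplexConjugate ENNReal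

lemma exists_card_eq_sum_take_sort {ι α : Type*} [Fintype ι] [LinearOrder α] [AddCommMonoid α]
    (f : ι → α) {N : ℕ}
    (hN : N ≤ Fintype.card ι) :
    ∃ T : Finset ι, T.card = N ∧
      ((Multiset.sort (univ.val.map f) (· ≤ ·)).take N).sum = ∑ i ∈ T, f i := by
  classical
  set l := Multiset.sort (univ.val.map f) (· ≤ ·)
  have hperm : l.Perm (univ.toList.map f) := by
    rw [← Multiset.coe_eq_coe, Multiset.sort_eq, ← Multiset.map_coe, coe_toList]
  obtain ⟨l', hl'perm, hl'sub⟩ := (List.take_sublist N l).subperm.trans hperm.subperm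
  obtain ⟨L, hLsub, rfl⟩ := List.sublist_map_iff.1 hl'sub
  have hL : L.Nodup := (nodup_toList univ).sublist hLsub
  refine ⟨L.toFinset, ?_, ?_⟩
  · rw [List.toFinset_card_of_nodup hL, ← List.length_map (f := f), hl'perm.length_eq,
      List.length_take, Multiset.length_sort, Multiset.card_map, card_val, card_univ,
      min_eq_left hN]
  · rw [← hl'perm.sum_eq, List.sum_toFinset _ hL]

lemma bathtub_principle {α : Type*} [MeasurableSpace α] {ν : Measure α}
    [IsFiniteMeasure ν] {ε M : α → ℝ} {C c : ℝ} (hε : Integrable ε ν) (hM : Integrable M ν)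
    (hεM : Integrable (fun x => ε x * M x) ν) (hF : MeasurableSet {x | ε x < c})
    (hM0 : ∀ x, 0 ≤ M x) (hMC : ∀ x, M x ≤ C) (hc : 0 ≤ c)
    (hmass : C * ν.real {x | ε x < c} ≤ ∫ x, M x ∂ν) :
    C * ∫ x in {x | ε x < c}, ε x ∂ν ≤ ∫ x, ε x * M x ∂ν := by
  have hpoint : ∀ x, {x | ε x < c}.indicator (fun x => (ε x - c) * C) x ≤
      ε x * M x - c * M x := fun x => by
    by_cases hx : ε x < c
    · rw [Set.indicator_of_mem (show x ∈ {x | ε x < c} from hx)]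
      nlinarith [hMC x]
    · rw [Set.indicator_of_notMem (show x ∉ {x | ε x < c} from hx)]
      nlinarith [hM0 x]
  have hsub : Integrable (fun x => (ε x - c) * C) ν := (hε.sub (integrable_const c)).mul_const C
  have hdiff : Integrable (fun x => ε x * M x - c * M x) ν := hεM.sub (hM.const_mul c)
  have hintegrated := integral_mono (hsub.indicator hF) hdiff hpoint
  rw [integral_indicator hF, integral_mul_const, integral_sub hε.integrableOn (integrable_const c),
    setIntegral_const, integral_sub hεM (hM.const_mul c), integral_const_mul] at hintegrated
  simp only [smul_eq_mul] at hintegrated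
  nlinarith [mul_le_mul_of_nonneg_left hmass hc]

lemma measure_setOf_lt_le_of_forall_lt {α : Type*} [MeasurableSpace α] (ν : Measure α)
    (f : α → ℝ) {c : ℝ} {B : ℝ≥0∞} (h : ∀ E < c, ν {x | f x < E} ≤ B) :
    ν {x | f x < c} ≤ B := by
  have hunion : {x | f x < c} = ⋃ n : ℕ, {x | f x < c - 1 / (n + 1)} := by
    ext x
    simp only [Set.mem_ofPred_eq, Set.mem_iUnion]
    constructor
    · intro hx
      obtain ⟨n, hn⟩ := exists_nat_one_div_lt (sub_pos.2 hx)
      exact ⟨n, by linarith⟩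
    · rintro ⟨n, hn⟩
      linarith [Nat.one_div_pos_of_nat (α := ℝ) (n := n)]
  have hmono : Monotone fun n : ℕ => {x | f x < c - 1 / (n + 1)} := fun a b hab x hx => by
    simp only [Set.mem_ofPred_eq] at hx ⊢
    linarith [Nat.one_div_le_one_div (α := ℝ) hab]
  rw [hunion, hmono.measure_iUnion]
  exact iSup_le fun n => h _ (by linarith [Nat.one_div_pos_of_nat (α := ℝ) (n := n)])

lemma integral_exp_int_mul_I (n : ℤ) :
    ∫ t in Set.Icc (-π) π, exp ((n * t : ℝ) * I) = if n = 0 then ((2 * π : ℝ) : ℂ) else 0 := by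
  rw [integral_Icc_eq_integral_Ioc, ← intervalIntegral.integral_of_le (by linarith [Real.pi_pos])]
  split_ifs with hn
  · simp [hn, two_mul]
  · have hn' : (n : ℝ) ≠ 0 := Int.cast_ne_zero.2 hn
    rw [intervalIntegral.integral_comp_mul_left (fun s : ℝ => exp (s * I)) hn', mul_neg,
      integral_exp_mul_I_eq_sin, Real.sin_int_mul_pi]
    simp

namespace FreeFermion

def brillouinZone (d : ℕ) : Set (Fin d → ℝ) := Set.univ.pi fun _ => Set.Icc (-π) π

lemma setOf_inBZ (d : ℕ) : {k | inBZ d k} = brillouinZone d := by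
  ext k
  simp only [Set.mem_ofPred_eq, inBZ, brillouinZone, Set.mem_univ_pi, Set.mem_Icc, abs_le]

lemma isCompact_brillouinZone (d : ℕ) : IsCompact (brillouinZone d) :=
  isCompact_univ_pi fun _ => isCompact_Icc

lemma measurableSet_brillouinZone (d : ℕ) : MeasurableSet (brillouinZone d) :=
  .univ_pi fun _ => measurableSet_Icc

instance (d : ℕ) : IsFiniteMeasure (volume.restrict (brillouinZone d)) :=
  isFiniteMeasure_restrict.2 (isCompact_brillouinZone d).measure_ne_top

lemma integrableOn_brillouinZone {d : ℕ} {E : Type*} [NormedAddCommGroup E]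
    {f : (Fin d → ℝ) → E} (hf : Continuous f) : IntegrableOn f (brillouinZone d) :=
  hf.continuousOn.integrableOn_compact (isCompact_brillouinZone d)

lemma setIntegral_brillouinZone_prod {d : ℕ} (f : Fin d → ℝ → ℂ) :
    ∫ k in brillouinZone d, ∏ i, f i (k i) = ∏ i, ∫ t in Set.Icc (-π) π, f i t := by
  rw [brillouinZone, volume_pi, Measure.restrict_pi_pi]
  exact integral_fintype_prod_eq_prod f

def planeWave {d : ℕ} (m : Fin d → ℤ) (k : Fin d → ℝ) : ℂ :=
  exp ((∑ i, (m i : ℝ) * k i : ℝ) * I)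

lemma continuous_planeWave {d : ℕ} (m : Fin d → ℤ) : Continuous (planeWave m) := by
  unfold planeWave
  fun_prop

lemma norm_planeWave {d : ℕ} (m : Fin d → ℤ) (k : Fin d → ℝ) : ‖planeWave m k‖ = 1 :=
  norm_exp_ofReal_mul_I _

lemma planeWave_add {d : ℕ} (a b : Fin d → ℤ) (k : Fin d → ℝ) :
    planeWave (a + b) k = planeWave a k * planeWave b k := by
  simp only [planeWave, ← exp_add, Pi.add_apply, Int.cast_add, add_mul,
    sum_add_distrib, ofReal_add]

lemma conj_planeWave {d : ℕ} (m : Fin d → ℤ) (k : Fin d → ℝ) :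
    conj (planeWave m k) = planeWave (-m) k := by
  simp only [planeWave, ← exp_conj, map_mul, conj_ofReal, conj_I, Pi.neg_apply, Int.cast_neg,
    neg_mul, sum_neg_distrib, ofReal_neg, mul_neg]

lemma integral_planeWave {d : ℕ} (m : Fin d → ℤ) :
    ∫ k in brillouinZone d, planeWave m k = if m = 0 then (((2 * π) ^ d : ℝ) : ℂ) else 0 := by
  have hprod : ∀ k, planeWave m k = ∏ i, exp ((m i * k i : ℝ) * I) := fun k => by
    simp only [planeWave, ofReal_sum, sum_mul, exp_sum]
  simp_rw [hprod, setIntegral_brillouinZone_prod fun i t => exp ((m i * t : ℝ) * I),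
    integral_exp_int_mul_I]
  split_ifs with hm
  · simp [hm]
  · obtain ⟨i, hi⟩ := Function.ne_iff.1 hm
    exact prod_eq_zero (mem_univ i) (if_neg hi)

lemma continuous_epsk (d : ℕ) : Continuous (epsk d) := by
  unfold epsk
  fun_prop

lemma epsk_nonneg {d : ℕ} (k : Fin d → ℝ) : 0 ≤ epsk d k := by
  have h : ∑ i, Real.cos (k i) ≤ d := by
    simpa using sum_le_sum fun i (_ : i ∈ univ) => Real.cos_le_one (k i)
  rw [epsk]
  linarith

lemma unitVec_injective (d : ℕ) : Function.Injective (unitVec d) := by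
  rintro ⟨i, s⟩ ⟨j, t⟩ h
  have hi := congrFun h i
  by_cases hij : i = j <;> cases s <;> cases t <;> simp_all [unitVec]

lemma sum_natAbs_eq_one_iff {d : ℕ} (m : Fin d → ℤ) :
    ∑ i, (m i).natAbs = 1 ↔ ∃ p, unitVec d p = m := by
  constructor
  · intro h
    obtain ⟨i, hi⟩ : ∃ i, m i ≠ 0 := by
      by_contra! h0
      simp [h0] at h
    have hsplit := (add_sum_erase _ (fun j => (m j).natAbs) (mem_univ i)).trans h
    have hmi : (m i).natAbs = 1 := by have := Int.natAbs_pos.2 hi; omega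
    have hrest0 : ∑ j ∈ univ.erase i, (m j).natAbs = 0 := by omega
    have hrest : ∀ j ≠ i, m j = 0 := fun j hj =>
      Int.natAbs_eq_zero.1 <| sum_eq_zero_iff.1 hrest0 j (mem_erase.2 ⟨hj, mem_univ j⟩)
    refine ⟨(i, decide (m i = 1)), funext fun j => ?_⟩
    by_cases hj : j = i
    · subst hj
      rcases Int.natAbs_eq_iff.1 hmi with h1 | h1 <;> simp [unitVec, h1]
    · simp [unitVec, hj, hrest j hj]
  · rintro ⟨⟨i, s⟩, rfl⟩
    cases s <;> simp [unitVec, apply_ite Int.natAbs]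

lemma sum_ite_unitVec_eq {d : ℕ} (m : Fin d → ℤ) :
    (∑ p, if unitVec d p = m then (1 : ℂ) else 0) =
      if ∑ i, (m i).natAbs = 1 then 1 else 0 := by
  by_cases h : ∃ p, unitVec d p = m
  · obtain ⟨p, rfl⟩ := h
    rw [if_pos ((sum_natAbs_eq_one_iff _).2 ⟨p, rfl⟩)]
    simp [(unitVec_injective d).eq_iff]
  · rw [if_neg (mt (sum_natAbs_eq_one_iff m).1 h)]
    exact sum_eq_zero fun p _ => if_neg fun hp => h ⟨p, hp⟩

lemma epsk_eq_sum_planeWave {d : ℕ} (k : Fin d → ℝ) :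
    (epsk d k : ℂ) = 2 * d - ∑ p, planeWave (unitVec d p) k := by
  have hwave : ∀ i, ∑ s, planeWave (unitVec d (i, s)) k = 2 * cos (k i) := fun i => by
    simp [planeWave, unitVec, two_cos]
  rw [Fintype.sum_prod_type, sum_congr rfl fun i _ => hwave i, ← mul_sum, epsk]
  push_cast
  rfl

lemma integral_epsk_mul_planeWave {d : ℕ} (m : Fin d → ℤ) :
    ∫ k in brillouinZone d, (epsk d k : ℂ) * planeWave (-m) k =
      (((2 * π) ^ d : ℝ) : ℂ) *
        ((if m = 0 then (2 * d : ℂ) else 0) - if ∑ i, (m i).natAbs = 1 then 1 else 0) := by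
  have hexpand : ∀ k, (epsk d k : ℂ) * planeWave (-m) k =
      2 * d * planeWave (-m) k - ∑ p, planeWave (unitVec d p + -m) k := fun k => by
    simp only [epsk_eq_sum_planeWave, sub_mul, sum_mul, planeWave_add]
  have hint : ∀ a : Fin d → ℤ, IntegrableOn (planeWave a) (brillouinZone d) :=
    fun a => integrableOn_brillouinZone (continuous_planeWave a)
  simp_rw [hexpand]
  rw [integral_sub ((hint _).const_mul _) (integrable_finsetSum _ fun p _ => hint _),
    integral_const_mul, integral_finsetSum _ fun p _ => hint _]
  simp only [integral_planeWave, neg_eq_zero, add_neg_eq_zero]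
  rw [← sum_ite_unitVec_eq, mul_sub, mul_sum]
  congr 1
  · split_ifs <;> ring
  · exact sum_congr rfl fun p _ => by split_ifs <;> simp

lemma integral_epsk_mul_planeWave_sub {d : ℕ} {Λ : Finset (Fin d → ℤ)} (x y : Λ) :
    ∫ k in brillouinZone d, (epsk d k : ℂ) * planeWave ((y : Fin d → ℤ) - (x : Fin d → ℤ)) k =
      (((2 * π) ^ d : ℝ) : ℂ) * lapMatrix d Λ x y := by
  rw [← neg_sub, integral_epsk_mul_planeWave]
  congr 1
  have hdist : dist1 d x y = ∑ i, (((x : Fin d → ℤ) - y) i).natAbs := rfl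
  simp only [lapMatrix, hdist, sub_eq_zero, ← Subtype.ext_iff]
  split_ifs <;> subst_vars <;> simp_all

section LatticeFourier

variable {d : ℕ} {Λ : Finset (Fin d → ℤ)}

def latticeFourier (v : Λ → ℂ) (k : Fin d → ℝ) : ℂ :=
  ∑ x, v x * planeWave (x : Fin d → ℤ) k

lemma continuous_latticeFourier (v : Λ → ℂ) : Continuous (latticeFourier v) :=
  continuous_finsetSum _ fun _ _ => continuous_const.mul (continuous_planeWave _)

lemma norm_sq_latticeFourier (v : Λ → ℂ) (k : Fin d → ℝ) :
    (‖latticeFourier v k‖ ^ 2 : ℂ) =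
      ∑ x, ∑ y, conj (v x) * v y * planeWave ((y : Fin d → ℤ) - (x : Fin d → ℤ)) k := by
  rw [← conj_mul', latticeFourier, map_sum, sum_mul_sum]
  refine sum_congr rfl fun x _ => sum_congr rfl fun y _ => ?_
  rw [map_mul, conj_planeWave, sub_eq_neg_add, planeWave_add]
  ring

lemma ofReal_integral_mul_norm_sq_latticeFourier {g : (Fin d → ℝ) → ℝ} (hg : Continuous g)
    (v : Λ → ℂ) :
    ((∫ k in brillouinZone d, g k * ‖latticeFourier v k‖ ^ 2 : ℝ) : ℂ) =
      ∑ x, ∑ y, conj (v x) * v y *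
        ∫ k in brillouinZone d, (g k : ℂ) * planeWave ((y : Fin d → ℤ) - (x : Fin d → ℤ)) k := by
  have hint : ∀ x y : Λ, IntegrableOn (fun k => conj (v x) * v y *
      ((g k : ℂ) * planeWave ((y : Fin d → ℤ) - (x : Fin d → ℤ)) k)) (brillouinZone d) :=
    fun x y => integrableOn_brillouinZone <|
      continuous_const.mul ((continuous_ofReal.comp hg).mul (continuous_planeWave _))
  rw [← integral_complex_ofReal]
  push_cast
  simp_rw [norm_sq_latticeFourier, mul_sum, mul_left_comm (g _ : ℂ)]
  rw [integral_finsetSum _ fun x _ => integrable_finsetSum _ fun y _ => hint x y]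
  simp_rw [integral_finsetSum _ fun y _ => hint _ y, integral_const_mul]

lemma integral_norm_sq_latticeFourier (v : Λ → ℂ) :
    ∫ k in brillouinZone d, ‖latticeFourier v k‖ ^ 2 = (2 * π) ^ d * ∑ x, ‖v x‖ ^ 2 := by
  have h := ofReal_integral_mul_norm_sq_latticeFourier continuous_const v (g := fun _ => 1)
  simp only [one_mul, ofReal_one, integral_planeWave, sub_eq_zero, ← Subtype.ext_iff,
    mul_ite, mul_zero, sum_ite_eq', mem_univ, if_true] at h
  have hc : ((∫ k in brillouinZone d, ‖latticeFourier v k‖ ^ 2 : ℝ) : ℂ) =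
      (((2 * π) ^ d * ∑ x, ‖v x‖ ^ 2 : ℝ) : ℂ) := by
    rw [h]
    push_cast
    rw [mul_sum]
    exact sum_congr rfl fun x _ => by rw [conj_mul']; ring
  exact_mod_cast hc

lemma integral_epsk_mul_norm_sq_latticeFourier (v : Λ → ℂ) :
    ∫ k in brillouinZone d, epsk d k * ‖latticeFourier v k‖ ^ 2 =
      (2 * π) ^ d * (star v ⬝ᵥ (lapMatrix d Λ *ᵥ v)).re := by
  have h := congrArg re (ofReal_integral_mul_norm_sq_latticeFourier (continuous_epsk d) v)
  rw [ofReal_re] at h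
  simp_rw [integral_epsk_mul_planeWave_sub] at h
  rw [h, ← re_ofReal_mul]
  congr 1
  simp only [dotProduct, mulVec, Pi.star_apply, mul_sum]
  exact sum_congr rfl fun x _ => sum_congr rfl fun y _ => by rw [star_def]; ring

variable {ι : Type*}

def momentumDensity (u : ι → EuclideanSpace ℂ Λ) (T : Finset ι) (k : Fin d → ℝ) : ℝ :=
  ∑ i ∈ T, ‖latticeFourier (u i).ofLp k‖ ^ 2

lemma momentumDensity_nonneg (u : ι → EuclideanSpace ℂ Λ) (T : Finset ι) (k : Fin d → ℝ) :
    0 ≤ momentumDensity u T k :=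
  sum_nonneg fun _ _ => by positivity

lemma continuous_momentumDensity (u : ι → EuclideanSpace ℂ Λ) (T : Finset ι) :
    Continuous (momentumDensity u T) :=
  continuous_finsetSum _ fun _ _ => (continuous_latticeFourier _).norm.pow 2

lemma latticeFourier_eq_inner (v : EuclideanSpace ℂ Λ) (k : Fin d → ℝ) :
    latticeFourier v.ofLp k =
      inner ℂ (WithLp.toLp 2 (star fun x : Λ => planeWave (x : Fin d → ℤ) k)) v := by
  simp [EuclideanSpace.inner_eq_star_dotProduct, dotProduct, latticeFourier]

lemma norm_sq_toLp_star_planeWave (k : Fin d → ℝ) :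
    ‖WithLp.toLp 2 (star fun x : Λ => planeWave (x : Fin d → ℤ) k)‖ ^ 2 = Λ.card := by
  rw [EuclideanSpace.norm_sq_eq]
  simp only [Pi.star_apply, norm_star, norm_planeWave, one_pow, sum_const,
    card_univ, Fintype.card_coe, nsmul_eq_mul, mul_one]

lemma momentumDensity_le_card {u : ι → EuclideanSpace ℂ Λ} (hu : Orthonormal ℂ u)
    (T : Finset ι) (k : Fin d → ℝ) : momentumDensity u T k ≤ Λ.card := by
  let e : EuclideanSpace ℂ Λ := WithLp.toLp 2 (star fun x : Λ => planeWave (x : Fin d → ℤ) k)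
  calc momentumDensity u T k = ∑ i ∈ T, ‖inner ℂ (u i) e‖ ^ 2 :=
        sum_congr rfl fun i _ => by rw [latticeFourier_eq_inner, norm_inner_symm]
    _ ≤ ‖e‖ ^ 2 := hu.sum_inner_products_le e
    _ = Λ.card := norm_sq_toLp_star_planeWave k

lemma integral_momentumDensity {u : ι → EuclideanSpace ℂ Λ} (hu : Orthonormal ℂ u)
    (T : Finset ι) : ∫ k in brillouinZone d, momentumDensity u T k = (2 * π) ^ d * T.card := by
  have hint : ∀ i, IntegrableOn (fun k => ‖latticeFourier (u i).ofLp k‖ ^ 2) (brillouinZone d) :=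
    fun i => integrableOn_brillouinZone ((continuous_latticeFourier _).norm.pow 2)
  simp only [momentumDensity]
  rw [integral_finsetSum _ fun i _ => hint i]
  have hnorm : ∀ i, ∑ x, ‖(u i).ofLp x‖ ^ 2 = 1 := fun i => by
    rw [← EuclideanSpace.norm_sq_eq, hu.1 i, one_pow]
  simp only [integral_norm_sq_latticeFourier, hnorm, sum_const, nsmul_eq_mul]
  ring

lemma integral_epsk_mul_momentumDensity (u : ι → EuclideanSpace ℂ Λ) (T : Finset ι) :
    ∫ k in brillouinZone d, epsk d k * momentumDensity u T k =
      (2 * π) ^ d * ∑ i ∈ T, (star (u i).ofLp ⬝ᵥ (lapMatrix d Λ *ᵥ (u i).ofLp)).re := by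
  have hint : ∀ i, IntegrableOn (fun k => epsk d k * ‖latticeFourier (u i).ofLp k‖ ^ 2)
      (brillouinZone d) :=
    fun i => integrableOn_brillouinZone
      ((continuous_epsk d).mul ((continuous_latticeFourier _).norm.pow 2))
  simp only [momentumDensity, mul_sum]
  rw [integral_finsetSum _ fun i _ => hint i]
  simp_rw [integral_epsk_mul_norm_sq_latticeFourier]

end LatticeFourier

lemma integral_epsk_mul_momentumDensity_eigenvectorBasis {d : ℕ} {Λ : Finset (Fin d → ℤ)}
    (T : Finset Λ) :
    ∫ k in brillouinZone d,
        epsk d k * momentumDensity (lapMatrix_isHermitian d Λ).eigenvectorBasis T k =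
      (2 * π) ^ d * ∑ x ∈ T, (lapMatrix_isHermitian d Λ).eigenvalues x := by
  simp only [integral_epsk_mul_momentumDensity, Matrix.IsHermitian.eigenvalues_eq,
    RCLike.re_to_complex]

lemma lowSum_eq_sum_eigenvalues (d : ℕ) (Λ : Finset (Fin d → ℤ)) {N : ℕ} (hN : N ≤ Λ.card) :
    ∃ T : Finset Λ, T.card = N ∧
      lowSum d Λ N = ∑ x ∈ T, (lapMatrix_isHermitian d Λ).eigenvalues x :=
  exists_card_eq_sum_take_sort _ (by rwa [Fintype.card_coe])

lemma setOf_inBZ_and_epsk_lt (d : ℕ) (E : ℝ) :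
    {k | inBZ d k ∧ epsk d k < E} = {k | epsk d k < E} ∩ brillouinZone d := by
  rw [← setOf_inBZ]
  ext k
  simp [and_comm]

lemma measurableSet_setOf_epsk_lt (d : ℕ) (E : ℝ) : MeasurableSet {k | epsk d k < E} :=
  (continuous_epsk d).measurable measurableSet_Iio

lemma volBelow_eq_measureReal (d : ℕ) (E : ℝ) :
    volBelow d E = (volume.restrict (brillouinZone d)).real {k | epsk d k < E} := by
  rw [volBelow, measureReal_def, Measure.restrict_apply' (measurableSet_brillouinZone d),
    setOf_inBZ_and_epsk_lt]

lemma setIntegral_setOf_epsk_lt_fermiLevel (d : ℕ) (ρ : ℝ) :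
    ∫ k in {k | epsk d k < fermiLevel d ρ}, epsk d k ∂(volume.restrict (brillouinZone d)) =
      (2 * π) ^ d * enGS d ρ := by
  rw [Measure.restrict_restrict (measurableSet_setOf_epsk_lt d _), ← setOf_inBZ_and_epsk_lt,
    enGS, mul_div_cancel₀ _ (by positivity)]

lemma volBelow_of_nonpos (d : ℕ) {E : ℝ} (hE : E ≤ 0) : volBelow d E = 0 := by
  have hempty : {k : Fin d → ℝ | inBZ d k ∧ epsk d k < E} = ∅ :=
    Set.eq_empty_of_forall_notMem fun k hk => (epsk_nonneg k).not_gt (hk.2.trans_le hE)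
  rw [volBelow, hempty, measure_empty, ENNReal.toReal_zero]

/-- For `ρ ≤ 0` every level `E` qualifies, and `sInf` of the unbounded set `ℝ` is the junk
value `0`. -/
lemma fermiLevel_of_nonpos (d : ℕ) {ρ : ℝ} (hρ : ρ ≤ 0) : fermiLevel d ρ = 0 := by
  have huniv : {E : ℝ | ρ ≤ volBelow d E / (2 * π) ^ d} = Set.univ :=
    Set.eq_univ_of_forall fun E => hρ.trans (by unfold volBelow; positivity)
  rw [fermiLevel, huniv, Real.sInf_univ]

lemma pos_of_le_volBelow_div (d : ℕ) {ρ E : ℝ} (hρ : 0 < ρ)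
    (hE : ρ ≤ volBelow d E / (2 * π) ^ d) : 0 < E := by
  by_contra! h
  rw [volBelow_of_nonpos d h, zero_div] at hE
  linarith

lemma fermiLevel_nonneg (d : ℕ) (ρ : ℝ) : 0 ≤ fermiLevel d ρ := by
  rcases le_or_gt ρ 0 with hρ | hρ
  · exact (fermiLevel_of_nonpos d hρ).ge
  · exact Real.sInf_nonneg fun E hE => (pos_of_le_volBelow_div d hρ hE).le

lemma volBelow_fermiLevel_le (d : ℕ) {ρ : ℝ} (hρ : 0 ≤ ρ) :
    volBelow d (fermiLevel d ρ) ≤ (2 * π) ^ d * ρ := by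
  rcases hρ.eq_or_lt with rfl | hρ
  · rw [fermiLevel_of_nonpos d le_rfl, volBelow_of_nonpos d le_rfl, mul_zero]
  have hbdd : BddBelow {E : ℝ | ρ ≤ volBelow d E / (2 * π) ^ d} :=
    ⟨0, fun E hE => (pos_of_le_volBelow_div d hρ hE).le⟩
  have hbelow : ∀ E < fermiLevel d ρ, volBelow d E ≤ (2 * π) ^ d * ρ := fun E hE => by
    have hnot : ¬ ρ ≤ volBelow d E / (2 * π) ^ d := fun hmem =>
      (csInf_le hbdd hmem).not_gt hE
    rw [not_le, div_lt_iff₀ (by positivity)] at hnot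
    linarith
  rw [volBelow_eq_measureReal]
  refine ENNReal.toReal_le_of_le_ofReal (by positivity) <|
    measure_setOf_lt_le_of_forall_lt _ _ fun E hE => ?_
  rw [ENNReal.le_ofReal_iff_toReal_le (measure_ne_top _ _) (by positivity), ← measureReal_def,
    ← volBelow_eq_measureReal]
  exact hbelow E hE

lemma card_mul_volBelow_fermiLevel_le (d : ℕ) {N L : ℕ} (hN : N ≤ L) :
    (L : ℝ) * volBelow d (fermiLevel d (N / L)) ≤ (2 * π) ^ d * N := by
  have hρ : (N / L : ℝ) * L = N := div_mul_cancel_of_imp fun h => by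
    simpa using Nat.le_zero.1 (hN.trans (Nat.cast_eq_zero.1 h).le)
  calc (L : ℝ) * volBelow d (fermiLevel d (N / L)) ≤ L * ((2 * π) ^ d * (N / L)) := by
        gcongr
        exact volBelow_fermiLevel_le d (by positivity)
    _ = (2 * π) ^ d * N := by linear_combination (2 * π) ^ d * hρ

end FreeFermion

end

open FreeFermion MeasureTheory in
theorem lowSum_ge_bulk_general (d : ℕ) (Λ : Finset (Fin d → ℤ))
    (N : ℕ) (hN : N ≤ Λ.card) :
    lowSum d Λ N ≥ enGS d ((N : ℝ) / Λ.card) * Λ.card := by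
  set u := (lapMatrix_isHermitian d Λ).eigenvectorBasis
  obtain ⟨T, hTcard, hT⟩ := lowSum_eq_sum_eigenvalues d Λ hN
  set ρ : ℝ := (N : ℝ) / Λ.card
  have hmass : (Λ.card : ℝ) * (volume.restrict (brillouinZone d)).real
      {k | epsk d k < fermiLevel d ρ} ≤ ∫ k in brillouinZone d, momentumDensity u T k := by
    rw [← volBelow_eq_measureReal, integral_momentumDensity u.orthonormal, hTcard]
    exact card_mul_volBelow_fermiLevel_le d hN
  have key := bathtub_principle (ν := volume.restrict (brillouinZone d))
    (integrableOn_brillouinZone (continuous_epsk d))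
    (integrableOn_brillouinZone (continuous_momentumDensity u T))
    (integrableOn_brillouinZone ((continuous_epsk d).mul (continuous_momentumDensity u T)))
    (measurableSet_setOf_epsk_lt d _) (momentumDensity_nonneg u T)
    (momentumDensity_le_card u.orthonormal T) (fermiLevel_nonneg d ρ) hmass
  rw [setIntegral_setOf_epsk_lt_fermiLevel, integral_epsk_mul_momentumDensity_eigenvectorBasis,
    ← hT] at key
  have hvol : (0 : ℝ) < (2 * Real.pi) ^ d := by positivity
  exact le_of_mul_le_mul_left (by linear_combination key) hvol

/-- For every `d ≥ 1`, every finite nonempty `Λ ⊂ ℤ^d` and `0 ≤ N ≤ |Λ|`,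
the sum of the `N` lowest eigenvalues satisfies `S_{Λ,N} ≥ e(N/|Λ|)·|Λ|`. -/
theorem lowSum_ge_bulk (d : ℕ) (hd : 1 ≤ d) (Λ : Finset (Fin d → ℤ))
    (hΛ : Λ.Nonempty) (N : ℕ) (hN : N ≤ Λ.card) :
    lowSum d Λ N ≥ enGS d ((N : ℝ) / Λ.card) * Λ.card :=
  lowSum_ge_bulk_general d Λ N hN
end

section
/- For every integer d ≥ 1, every finite nonempty Λ ⊂ ℤ^d, and every k ∈ [−π,π]^d, the boundary vector b_k satisfies ‖b_k‖² ≤ 2d·B(Λ); moreover, if |k|_∞ ≤ π/4 then ‖b_k‖² ≥ B(Λ). -/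
open scoped BigOperators

noncomputable section

/-- `∂Λ`: sites of `Λ` having a nearest neighbor outside `Λ`. -/
def bdry (d : ℕ) (Λ : Finset (Fin d → ℤ)) : Finset (Fin d → ℤ) :=
  Λ.filter fun x => ∃ p : Fin d × Bool, x + unitVec d p ∉ Λ

/-- The boundary vector
`b_k(x) = χ_{∂Λ}(x)·e^{−i k·x}·Σ_{e : x+e ∉ Λ} e^{−i k·e}` (it vanishes outside `∂Λ`,
since the sum over outward unit vectors is then empty). -/
def bk (d : ℕ) (Λ : Finset (Fin d → ℤ)) (k : Fin d → ℝ) (x : Fin d → ℤ) : ℂ :=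
  if x ∈ Λ then
    Complex.exp (-Complex.I * ∑ i, (k i : ℂ) * ((x i : ℤ) : ℂ)) *
      ∑ p ∈ Finset.univ.filter (fun p : Fin d × Bool => x + unitVec d p ∉ Λ),
        Complex.exp (-Complex.I * (if p.2 then (k p.1 : ℂ) else -(k p.1 : ℂ)))
  else 0

/-- The discrete Laplacian `h_Λ` acting on functions extended by zero outside `Λ`:
`(h_Λ φ)(x) = −Σ_{y∈Λ, |y−x|₁=1} φ(y) + 2d·φ(x)`. -/
def lapAct (d : ℕ) (Λ : Finset (Fin d → ℤ)) (φ : (Fin d → ℤ) → ℂ) (x : Fin d → ℤ) : ℂ :=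
  -∑ y ∈ Λ.filter (fun y => dist1 d x y = 1), φ y + 2 * d * φ x

/-!
At a site `x ∈ Λ` with `n_x` outward directions `e`, `|b_k(x)|` is the modulus of a sum of the
`n_x ≤ 2d` unit complex numbers `e^{-i k·e}`. The triangle inequality gives
`|b_k(x)|² ≤ n_x² ≤ 2d·n_x`. If `|k|_∞ ≤ π/4`, these unit vectors are pairwise at angle at most
`π/2`, so all cross terms in the expansion of the square are nonnegative and `|b_k(x)|² ≥ n_x`.
Summing over `x` gives both bounds, since `B(Λ) = Σ_x n_x`.
-/

open Complex ComplexConjugate Real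
open scoped InnerProductSpace

theorem sum_norm_sq_le_norm_sum_sq_of_inner_nonneg {ι E : Type*} [NormedAddCommGroup E]
    [InnerProductSpace ℝ E] (s : Finset ι) (v : ι → E)
    (hv : ∀ p ∈ s, ∀ q ∈ s, 0 ≤ ⟪v p, v q⟫_ℝ) :
    ∑ p ∈ s, ‖v p‖ ^ 2 ≤ ‖∑ p ∈ s, v p‖ ^ 2 := by
  rw [← real_inner_self_eq_norm_sq, sum_inner]
  refine Finset.sum_le_sum fun p hp => ?_
  rw [inner_sum, ← real_inner_self_eq_norm_sq]
  exact Finset.single_le_sum (hv p hp) hp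

theorem inner_exp_ofReal_mul_I (a b : ℝ) :
    ⟪exp (a * I), exp (b * I)⟫_ℝ = Real.cos (b - a) := by
  rw [Complex.inner, ← exp_conj, map_mul, conj_ofReal, conj_I, ← Complex.exp_add,
    show (b : ℂ) * I + a * -I = ((b - a : ℝ) : ℂ) * I by push_cast; ring, exp_ofReal_mul_I_re]

theorem norm_sum_exp_ofReal_mul_I_le_card {ι : Type*} (s : Finset ι) (t : ι → ℝ) :
    ‖∑ p ∈ s, exp (t p * I)‖ ≤ s.card := by
  simpa using norm_sum_le s fun p => exp (t p * I)

/-- Unit vectors whose angles lie within `π/4` of `0` are pairwise at angle at most `π/2`. -/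
theorem card_le_norm_sum_exp_ofReal_mul_I_sq {ι : Type*} (s : Finset ι) (t : ι → ℝ)
    (ht : ∀ p ∈ s, |t p| ≤ π / 4) :
    (s.card : ℝ) ≤ ‖∑ p ∈ s, exp (t p * I)‖ ^ 2 := by
  have hinner : ∀ p ∈ s, ∀ q ∈ s, 0 ≤ ⟪exp (t p * I), exp (t q * I)⟫_ℝ := by
    intro p hp q hq
    rw [inner_exp_ofReal_mul_I]
    have := abs_le.mp (ht p hp)
    have := abs_le.mp (ht q hq)
    exact Real.cos_nonneg_of_mem_Icc ⟨by linarith, by linarith⟩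
  simpa using sum_norm_sq_le_norm_sum_sq_of_inner_nonneg s _ hinner

def outwardDirs (d : ℕ) (Λ : Finset (Fin d → ℤ)) (x : Fin d → ℤ) : Finset (Fin d × Bool) :=
  Finset.univ.filter fun p => x + unitVec d p ∉ Λ

def dotUnitVec {d : ℕ} (k : Fin d → ℝ) (p : Fin d × Bool) : ℝ :=
  if p.2 then k p.1 else -k p.1

theorem card_outwardDirs_le (d : ℕ) (Λ : Finset (Fin d → ℤ)) (x : Fin d → ℤ) :
    (outwardDirs d Λ x).card ≤ 2 * d := by
  simpa [outwardDirs, mul_comm] using Finset.card_filter_le (Finset.univ : Finset (Fin d × Bool))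
    fun p => x + unitVec d p ∉ Λ

theorem bonds_eq_sum_card_outwardDirs (d : ℕ) (Λ : Finset (Fin d → ℤ)) :
    (bonds d Λ : ℝ) = ∑ x ∈ Λ, ((outwardDirs d Λ x).card : ℝ) := by
  push_cast [bonds, outwardDirs]
  rfl

theorem abs_dotUnitVec_le {d : ℕ} (k : Fin d → ℝ) (p : Fin d × Bool) {c : ℝ}
    (hk : ∀ i, |k i| ≤ c) : |dotUnitVec k p| ≤ c := by
  unfold dotUnitVec
  split_ifs
  · exact hk p.1
  · rw [abs_neg]; exact hk p.1

theorem norm_bk (d : ℕ) (Λ : Finset (Fin d → ℤ)) (k : Fin d → ℝ) {x : Fin d → ℤ} (hx : x ∈ Λ) :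
    ‖bk d Λ k x‖ = ‖∑ p ∈ outwardDirs d Λ x, exp ((-dotUnitVec k p : ℝ) * I)‖ := by
  have hphase : ‖exp (-I * ∑ i, (k i : ℂ) * ((x i : ℤ) : ℂ))‖ = 1 := by
    rw [show ∑ i, (k i : ℂ) * ((x i : ℤ) : ℂ) = ((∑ i, k i * x i : ℝ) : ℂ) by push_cast; rfl,
      show -I * ((∑ i, k i * x i : ℝ) : ℂ) = ((-∑ i, k i * x i : ℝ) : ℂ) * I by push_cast; ring,
      norm_exp_ofReal_mul_I]
  rw [bk, if_pos hx, norm_mul, hphase, one_mul]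
  congr 1
  refine Finset.sum_congr rfl fun p _ => ?_
  unfold dotUnitVec
  split_ifs <;> push_cast <;> ring_nf

theorem norm_bk_sq_le (d : ℕ) (Λ : Finset (Fin d → ℤ)) (k : Fin d → ℝ) {x : Fin d → ℤ}
    (hx : x ∈ Λ) : ‖bk d Λ k x‖ ^ 2 ≤ 2 * d * ((outwardDirs d Λ x).card : ℝ) := by
  have hcard : ((outwardDirs d Λ x).card : ℝ) ≤ 2 * d := by
    exact_mod_cast card_outwardDirs_le d Λ x
  calc ‖bk d Λ k x‖ ^ 2 ≤ ((outwardDirs d Λ x).card : ℝ) ^ 2 := by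
        rw [norm_bk d Λ k hx]
        gcongr
        exact norm_sum_exp_ofReal_mul_I_le_card _ _
    _ ≤ 2 * d * ((outwardDirs d Λ x).card : ℝ) := by rw [sq]; gcongr

theorem card_outwardDirs_le_norm_bk_sq (d : ℕ) (Λ : Finset (Fin d → ℤ)) {k : Fin d → ℝ}
    (hk : ∀ i, |k i| ≤ π / 4) {x : Fin d → ℤ} (hx : x ∈ Λ) :
    ((outwardDirs d Λ x).card : ℝ) ≤ ‖bk d Λ k x‖ ^ 2 := by
  rw [norm_bk d Λ k hx]
  refine card_le_norm_sum_exp_ofReal_mul_I_sq _ _ fun p _ => ?_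
  rw [abs_neg]
  exact abs_dotUnitVec_le k p hk

theorem bk_normSq_bounds_general (d : ℕ) (Λ : Finset (Fin d → ℤ)) (k : Fin d → ℝ) :
    (∑ x ∈ Λ, ‖bk d Λ k x‖ ^ 2 ≤ 2 * d * bonds d Λ) ∧
    ((∀ i, |k i| ≤ Real.pi / 4) →
      (bonds d Λ : ℝ) ≤ ∑ x ∈ Λ, ‖bk d Λ k x‖ ^ 2) := by
  rw [bonds_eq_sum_card_outwardDirs, Finset.mul_sum]
  exact ⟨Finset.sum_le_sum fun x hx => norm_bk_sq_le d Λ k hx,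
    fun hk => Finset.sum_le_sum fun x hx => card_outwardDirs_le_norm_bk_sq d Λ hk hx⟩

/-- For every `k ∈ [−π,π]^d` the boundary vector satisfies `‖b_k‖² ≤ 2d·B(Λ)`;
moreover if `|k|_∞ ≤ π/4` then `‖b_k‖² ≥ B(Λ)`. -/
theorem bk_normSq_bounds (d : ℕ) (hd : 1 ≤ d) (Λ : Finset (Fin d → ℤ))
    (hΛ : Λ.Nonempty) (k : Fin d → ℝ) (hk : ∀ i, |k i| ≤ Real.pi) :
    (∑ x ∈ Λ, ‖bk d Λ k x‖ ^ 2 ≤ 2 * d * bonds d Λ) ∧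
    ((∀ i, |k i| ≤ Real.pi / 4) →
      (bonds d Λ : ℝ) ≤ ∑ x ∈ Λ, ‖bk d Λ k x‖ ^ 2) :=
  bk_normSq_bounds_general d Λ k

end
end

section
/- For every integer d ≥ 1, every finite nonempty Λ ⊂ ℤ^d, and every φ ∈ ℓ²(Λ) supported on ∂Λ, one has ‖h_Λ φ‖² ≤ 4d·(φ, h_Λ φ) − 2d·‖φ‖². -/
/-! Write `h_Λ = 2d − A`, with `A` the adjacency operator of `Λ`. Expanding both sides, the inequality
becomes `‖Aφ‖² ≤ 2d(2d − 1)‖φ‖²`. Cauchy–Schwarz on each row of `A` (at most `2d` neighbours)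
bounds `‖Aφ‖²` by `2d · Σ_y n(y)|φ(y)|²`, where `n(y)` is the number of neighbours of `y` in `Λ`.
Since `φ` is supported on `∂Λ` and a boundary site has at most `2d − 1` neighbours in `Λ`,
this is at most `2d(2d − 1)‖φ‖²`. -/

open scoped BigOperators

noncomputable section

open Finset

theorem sum_sq_norm_sum_filter_le {ι E : Type*} [SeminormedAddCommGroup E]
    (s : Finset ι) (r : ι → ι → Prop) [DecidableRel r] (f : ι → E) {D D' : ℝ} (hD : 0 ≤ D)
    (hrow : ∀ x ∈ s, (#(s.filter (r x)) : ℝ) ≤ D)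
    (hcol : ∀ y ∈ s, f y ≠ 0 → (#(s.filter (r · y)) : ℝ) ≤ D') :
    ∑ x ∈ s, ‖∑ y ∈ s.filter (r x), f y‖ ^ 2 ≤ D * D' * ∑ y ∈ s, ‖f y‖ ^ 2 := by
  have hcs : ∀ x ∈ s, ‖∑ y ∈ s.filter (r x), f y‖ ^ 2 ≤ D * ∑ y ∈ s.filter (r x), ‖f y‖ ^ 2 :=
    fun x hx => calc
      ‖∑ y ∈ s.filter (r x), f y‖ ^ 2 ≤ (∑ y ∈ s.filter (r x), ‖f y‖) ^ 2 := by
        gcongr; exact norm_sum_le _ _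
      _ ≤ #(s.filter (r x)) * ∑ y ∈ s.filter (r x), ‖f y‖ ^ 2 := sq_sum_le_card_mul_sum_sq
      _ ≤ D * ∑ y ∈ s.filter (r x), ‖f y‖ ^ 2 := by gcongr; exact hrow x hx
  have hswap : ∑ x ∈ s, ∑ y ∈ s.filter (r x), ‖f y‖ ^ 2 =
      ∑ y ∈ s, #(s.filter (r · y)) * ‖f y‖ ^ 2 := by
    simp only [sum_filter]
    rw [sum_comm]
    refine sum_congr rfl fun y _ => ?_
    rw [← sum_filter, sum_const, nsmul_eq_mul]
  have hdeg : ∀ y ∈ s, #(s.filter (r · y)) * ‖f y‖ ^ 2 ≤ D' * ‖f y‖ ^ 2 := by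
    intro y hy
    rcases eq_or_ne (f y) 0 with hf | hf
    · simp [hf]
    · gcongr; exact hcol y hy hf
  calc ∑ x ∈ s, ‖∑ y ∈ s.filter (r x), f y‖ ^ 2
      ≤ D * ∑ x ∈ s, ∑ y ∈ s.filter (r x), ‖f y‖ ^ 2 := by
        rw [mul_sum]; exact sum_le_sum hcs
    _ ≤ D * (D' * ∑ y ∈ s, ‖f y‖ ^ 2) := by
        gcongr D * ?_
        rw [hswap, mul_sum]
        exact sum_le_sum hdeg
    _ = D * D' * ∑ y ∈ s, ‖f y‖ ^ 2 := (mul_assoc _ _ _).symm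

theorem sq_norm_ofReal_mul_sub (c : ℝ) (z w : ℂ) :
    ‖(c : ℂ) * z - w‖ ^ 2 =
      2 * c * (starRingEnd ℂ z * (c * z - w)).re - c ^ 2 * ‖z‖ ^ 2 + ‖w‖ ^ 2 := by
  simp only [Complex.sq_norm, Complex.normSq_apply, Complex.mul_re, Complex.mul_im,
    Complex.sub_re, Complex.sub_im, Complex.conj_re, Complex.conj_im, Complex.ofReal_re,
    Complex.ofReal_im]
  ring

theorem dist1_comm (d : ℕ) (x y : Fin d → ℤ) : dist1 d x y = dist1 d y x :=
  sum_congr rfl fun i _ => by rw [← Int.natAbs_neg, neg_sub]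

theorem exists_eq_unitVec_of_sum_natAbs_eq_one {d : ℕ} {z : Fin d → ℤ}
    (h : ∑ i, (z i).natAbs = 1) : ∃ p, z = unitVec d p := by
  obtain ⟨i, hi⟩ : ∃ i, (z i).natAbs ≠ 0 := by
    by_contra! hz
    simp [hz] at h
  have hsplit := add_sum_erase univ (fun j => (z j).natAbs) (mem_univ i)
  rw [h] at hsplit
  have hzi : (z i).natAbs = 1 := by omega
  have hrest0 : ∑ j ∈ univ.erase i, (z j).natAbs = 0 := by omega
  have hrest : ∀ j, j ≠ i → z j = 0 := fun j hj => Int.natAbs_eq_zero.mp <|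
    sum_eq_zero_iff.mp hrest0 j (mem_erase.mpr ⟨hj, mem_univ j⟩)
  rcases Int.natAbs_eq_iff.mp hzi with hz | hz
  · exact ⟨(i, true), funext fun j => by by_cases hj : j = i <;> simp [unitVec, hj, hz, hrest]⟩
  · exact ⟨(i, false), funext fun j => by by_cases hj : j = i <;> simp [unitVec, hj, hz, hrest]⟩

theorem exists_eq_add_unitVec_of_dist1_eq_one {d : ℕ} {x y : Fin d → ℤ}
    (h : dist1 d x y = 1) : ∃ p, y = x + unitVec d p := by
  obtain ⟨p, hp⟩ := exists_eq_unitVec_of_sum_natAbs_eq_one (z := y - x) (by rwa [dist1_comm] at h)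
  exact ⟨p, by rw [← hp, add_sub_cancel]⟩

theorem filter_dist1_eq_one_subset_image (d : ℕ) (s : Finset (Fin d → ℤ)) (x : Fin d → ℤ) :
    s.filter (dist1 d x · = 1) ⊆
      (univ.filter fun p => x + unitVec d p ∈ s).image (x + unitVec d ·) := by
  intro y hy
  obtain ⟨hys, hxy⟩ := mem_filter.mp hy
  obtain ⟨p, rfl⟩ := exists_eq_add_unitVec_of_dist1_eq_one hxy
  exact mem_image_of_mem _ (mem_filter.mpr ⟨mem_univ p, hys⟩)

theorem card_filter_dist1_eq_one_le_card_filter (d : ℕ) (s : Finset (Fin d → ℤ))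
    (x : Fin d → ℤ) :
    #(s.filter (dist1 d x · = 1)) ≤ #(univ.filter fun p => x + unitVec d p ∈ s) :=
  (card_le_card (filter_dist1_eq_one_subset_image d s x)).trans card_image_le

theorem card_filter_dist1_eq_one_le (d : ℕ) (s : Finset (Fin d → ℤ)) (x : Fin d → ℤ) :
    #(s.filter (dist1 d x · = 1)) ≤ 2 * d := by
  simpa [mul_comm] using
    (card_filter_dist1_eq_one_le_card_filter d s x).trans (card_filter_le univ _)

theorem card_filter_dist1_eq_one_add_one_le_of_mem_bdry {d : ℕ} {Λ : Finset (Fin d → ℤ)}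
    {y : Fin d → ℤ} (hy : y ∈ bdry d Λ) :
    #(Λ.filter (dist1 d · y = 1)) + 1 ≤ 2 * d := by
  obtain ⟨p, hp⟩ := (mem_filter.mp hy).2
  have hout : 1 ≤ #(univ.filter fun p => y + unitVec d p ∉ Λ) :=
    card_pos.mpr ⟨p, mem_filter.mpr ⟨mem_univ p, hp⟩⟩
  have hsplit := card_filter_add_card_filter_not (s := univ) (fun p => y + unitVec d p ∈ Λ)
  have hin := card_filter_dist1_eq_one_le_card_filter d Λ y
  simp only [dist1_comm _ _ y] at hin ⊢
  simp only [card_univ, Fintype.card_prod, Fintype.card_fin, Fintype.card_bool] at hsplit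
  omega

theorem lapAct_eq (d : ℕ) (Λ : Finset (Fin d → ℤ)) (φ : (Fin d → ℤ) → ℂ) (x : Fin d → ℤ) :
    lapAct d Λ φ x =
      ((2 * d : ℝ) : ℂ) * φ x - ∑ y ∈ Λ.filter (fun y => dist1 d x y = 1), φ y := by
  rw [lapAct]; push_cast; ring

theorem lap_sq_form_bound_general (d : ℕ) (Λ : Finset (Fin d → ℤ))
    (φ : (Fin d → ℤ) → ℂ)
    (hsupp : ∀ x, x ∉ bdry d Λ → φ x = 0) :
    ∑ x ∈ Λ, ‖lapAct d Λ φ x‖ ^ 2 ≤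
      4 * d * (∑ x ∈ Λ, (starRingEnd ℂ) (φ x) * lapAct d Λ φ x).re -
        2 * d * ∑ x ∈ Λ, ‖φ x‖ ^ 2 := by
  have hadj := sum_sq_norm_sum_filter_le Λ (fun x y => dist1 d x y = 1) φ
    (D := 2 * d) (D' := 2 * d - 1) (by positivity)
    (fun x _ => by exact_mod_cast card_filter_dist1_eq_one_le d Λ x)
    (fun y _ hy => by
      have := card_filter_dist1_eq_one_add_one_le_of_mem_bdry (not_imp_comm.mp (hsupp y) hy)
      rw [le_sub_iff_add_le]; exact_mod_cast this)
  simp_rw [lapAct_eq, sq_norm_ofReal_mul_sub]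
  rw [sum_add_distrib, sum_sub_distrib, ← mul_sum, ← mul_sum, Complex.re_sum]
  linarith

/-- For every `φ ∈ ℓ²(Λ)` supported on `∂Λ`:
`‖h_Λ φ‖² ≤ 4d·(φ, h_Λ φ) − 2d·‖φ‖²`. -/
theorem lap_sq_form_bound (d : ℕ) (hd : 1 ≤ d) (Λ : Finset (Fin d → ℤ))
    (hΛ : Λ.Nonempty) (φ : (Fin d → ℤ) → ℂ)
    (hsupp : ∀ x, x ∉ bdry d Λ → φ x = 0) :
    ∑ x ∈ Λ, ‖lapAct d Λ φ x‖ ^ 2 ≤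
      4 * d * (∑ x ∈ Λ, (starRingEnd ℂ) (φ x) * lapAct d Λ φ x).re -
        2 * d * ∑ x ∈ Λ, ‖φ x‖ ^ 2 :=
  lap_sq_form_bound_general d Λ φ hsupp

end
end

section
/- Fix an integer d ≥ 1 and ρ ∈ (0,1). The function g(α) = (1−α)·e(ρ/(1−α)) is convex on [0, 1−ρ], differentiable on the interior with derivative g′(α) = ξ(ρ/(1−α)), and satisfies g(α) ≥ e(ρ) + α·ξ(ρ) for all α ∈ [0, 1−ρ]. -/
open scoped BigOperators

noncomputable section

/-!
Let `N(E) = (2π)^{-d} vol{k ∈ [−π,π]^d : ε_k < E}`. The level sets of `ε` are null, so `N` is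
continuous; it is strictly increasing on `[0, 4d]`, so `ε_F` is its continuous inverse there.
Raising the density from `a` to `b` adds a shell of volume `(b - a)(2π)^d` on which
`ε_F(a) ≤ ε_k ≤ ε_F(b)`, hence `(b - a) ε_F(a) ≤ e(b) - e(a) ≤ (b - a) ε_F(b)`. Thus `e` is convex
with `e' = ε_F`. Now `g` is the perspective `t e(ρ/t)` of `e` at `t = 1 - α`: it is convex, has
derivative `(ρ/t) e'(ρ/t) - e(ρ/t) = ξ(ρ/t)`, and lies above the image of the supporting line
of `e` at `ρ`.
-/

open MeasureTheory Set Filter Topology Real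

theorem hasDerivAt_of_slope_mem_uIcc {f g : ℝ → ℝ} {x : ℝ} (hg : ContinuousAt g x)
    (h : ∀ᶠ y in 𝓝[≠] x, slope f x y ∈ uIcc (g x) (g y)) : HasDerivAt f (g x) x := by
  rw [hasDerivAt_iff_tendsto_slope]
  have hg' : Tendsto g (𝓝[≠] x) (𝓝 (g x)) := hg.tendsto.mono_left nhdsWithin_le_nhds
  refine tendsto_of_tendsto_of_tendsto_of_le_of_le' ?_ ?_ (h.mono fun y hy => hy.1)
    (h.mono fun y hy => hy.2)
  · simpa using (tendsto_const_nhds (x := g x)).min hg'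
  · simpa using (tendsto_const_nhds (x := g x)).max hg'

theorem hasDerivAt_one_sub_mul_comp_div {f : ℝ → ℝ} {f' c α : ℝ} (hα : α ≠ 1)
    (hf : HasDerivAt f f' (c / (1 - α))) :
    HasDerivAt (fun β => (1 - β) * f (c / (1 - β))) (c / (1 - α) * f' - f (c / (1 - α))) α := by
  have h1α : 1 - α ≠ 0 := sub_ne_zero.2 hα.symm
  have hsub : HasDerivAt (fun β : ℝ => 1 - β) (-1) α := by
    simpa using (hasDerivAt_id α).const_sub 1
  have hdiv : HasDerivAt (fun β => c / (1 - β)) (c / (1 - α) ^ 2) α :=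
    ((hasDerivAt_const α c).fun_div hsub h1α).congr_deriv (by ring)
  exact (hsub.fun_mul (hf.comp α hdiv)).congr_deriv <| by
    simp only [Function.comp_apply]
    field_simp
    ring

theorem ConvexOn.one_sub_mul_comp_div {s D : Set ℝ} {f : ℝ → ℝ} (hf : ConvexOn ℝ s f) (c : ℝ)
    (hD : Convex ℝ D) (hDs : ∀ α ∈ D, α < 1 ∧ c / (1 - α) ∈ s) :
    ConvexOn ℝ D (fun α => (1 - α) * f (c / (1 - α))) := by
  refine ⟨hD, fun x hx y hy a b ha hb hab => ?_⟩
  obtain ⟨hx1, hxs⟩ := hDs x hx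
  obtain ⟨hy1, hys⟩ := hDs y hy
  simp only [smul_eq_mul]
  have hx0 : 0 < 1 - x := by linarith
  have hy0 : 0 < 1 - y := by linarith
  set t := 1 - (a * x + b * y) with ht
  have ht' : t = a * (1 - x) + b * (1 - y) := by rw [ht]; linear_combination -hab
  have ht0 : 0 < t := by
    have := convex_Iio (1 : ℝ) hx1 hy1 ha hb hab
    rw [mem_Iio, smul_eq_mul, smul_eq_mul] at this
    linarith
  have hw : a * (1 - x) / t + b * (1 - y) / t = 1 := by
    rw [← add_div, ← ht', div_self ht0.ne']
  have hmid : (a * (1 - x) / t) • (c / (1 - x)) + (b * (1 - y) / t) • (c / (1 - y)) = c / t := by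
    simp only [smul_eq_mul]
    field_simp
    rw [hab, mul_one]
  have key := hf.2 hxs hys (by positivity) (by positivity) hw
  rw [hmid] at key
  simp only [smul_eq_mul] at key
  calc t * f (c / t)
      ≤ t * (a * (1 - x) / t * f (c / (1 - x)) + b * (1 - y) / t * f (c / (1 - y))) := by
        gcongr
    _ = a * ((1 - x) * f (c / (1 - x))) + b * ((1 - y) * f (c / (1 - y))) := by
        field_simp

section Dispersion

variable {d : ℕ}

theorem epsk_nonneg (k : Fin d → ℝ) : 0 ≤ epsk d k := by
  have := Finset.sum_le_sum fun i (_ : i ∈ Finset.univ) => Real.cos_le_one (k i)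
  simp only [Finset.sum_const, Finset.card_univ, Fintype.card_fin, nsmul_eq_mul, mul_one] at this
  unfold epsk
  linarith

theorem epsk_le (k : Fin d → ℝ) : epsk d k ≤ 4 * d := by
  have := Finset.sum_le_sum fun i (_ : i ∈ Finset.univ) => Real.neg_one_le_cos (k i)
  simp only [Finset.sum_const, Finset.card_univ, Fintype.card_fin, nsmul_eq_mul, mul_neg,
    mul_one] at this
  unfold epsk
  linarith

theorem continuous_epsk : Continuous (epsk d) := by
  unfold epsk
  fun_prop

theorem epsk_const (t : ℝ) : epsk d (fun _ => t) = 2 * d * (1 - cos t) := by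
  simp only [epsk, Finset.sum_const, Finset.card_univ, Fintype.card_fin, nsmul_eq_mul]
  ring

theorem exists_epsk_eq {E : ℝ} (hE : E ∈ Ioo 0 (4 * (d : ℝ))) :
    ∃ k ∈ univ.pi fun _ : Fin d => Ioo (-π) π, epsk d k = E := by
  have hcont : ContinuousOn (fun t : ℝ => epsk d (fun _ => t)) (Icc 0 π) := by
    unfold epsk; fun_prop
  have h0 : epsk d (fun _ => (0 : ℝ)) = 0 := by simp [epsk_const]
  have hπ : epsk d (fun _ => π) = 4 * d := by rw [epsk_const, Real.cos_pi]; ring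
  obtain ⟨t, ht, htE⟩ := intermediate_value_Ioo pi_pos.le hcont (by rwa [h0, hπ])
  exact ⟨fun _ => t, fun _ _ => ⟨by linarith [ht.1, pi_pos], ht.2⟩, htE⟩

theorem countable_setOf_cos_eq (c : ℝ) : {x : ℝ | cos x = c}.Countable := by
  refine (countable_iUnion fun n : ℤ =>
    ({2 * n * π + arccos c, 2 * n * π - arccos c} : Set ℝ).toFinite.countable).mono ?_
  intro x hx
  have hc : cos (arccos c) = cos x := by
    rw [← hx, Real.cos_arccos (hx ▸ Real.neg_one_le_cos x) (hx ▸ Real.cos_le_one x)]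
  obtain ⟨n, hn⟩ := Real.cos_eq_cos_iff.1 hc
  exact mem_iUnion.2 ⟨n, hn⟩

theorem volume_setOf_epsk_eq (hd : 1 ≤ d) (E : ℝ) : volume {k : Fin d → ℝ | epsk d k = E} = 0 := by
  obtain ⟨n, rfl⟩ : ∃ n, d = n + 1 := ⟨d - 1, by omega⟩
  -- split off the first coordinate: each slice `{x | cos x = c}` is countable
  set T : Set (ℝ × (Fin n → ℝ)) :=
    {p | cos p.1 = (n + 1 : ℝ) - E / 2 - ∑ j, cos (p.2 j)}
  have hT : MeasurableSet T := (isClosed_eq (by fun_prop) (by fun_prop)).measurableSet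
  have hset : {k : Fin (n + 1) → ℝ | epsk (n + 1) k = E}
      = MeasurableEquiv.piFinSuccAbove (fun _ => ℝ) 0 ⁻¹' T := by
    ext k
    simp only [mem_ofPred_eq, mem_preimage, T, epsk, Fin.sum_univ_succ]
    simp only [Nat.cast_add, Nat.cast_one, MeasurableEquiv.piFinSuccAbove, Fin.zero_succAbove,
      Fin.insertNthEquiv_zero, MeasurableEquiv.coe_mk, Fin.consEquiv_symm_apply, Fin.tail]
    constructor <;> intro h <;> linarith
  rw [hset, (volume_preserving_piFinSuccAbove (fun _ => ℝ) 0).measure_preimage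
    hT.nullMeasurableSet, Measure.volume_eq_prod, Measure.prod_apply_symm hT]
  have hslice (y : Fin n → ℝ) : volume ((fun x => (x, y)) ⁻¹' T) = 0 :=
    (countable_setOf_cos_eq ((n + 1 : ℝ) - E / 2 - ∑ j, cos (y j))).measure_zero volume
  simp [hslice]

end Dispersion

def fermiSea (d : ℕ) (E : ℝ) : Set (Fin d → ℝ) := {k | inBZ d k ∧ epsk d k < E}

/-- The integrated density of states `N(E)`. -/
def idos (d : ℕ) (E : ℝ) : ℝ := volume.real (fermiSea d E) / (2 * π) ^ d

section FermiSea

variable {d : ℕ}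

theorem setOf_inBZ_eq_pi :
    {k : Fin d → ℝ | inBZ d k} = univ.pi fun _ => Icc (-π) π := by
  ext k
  simp [inBZ, abs_le, Pi.le_def, forall_and]

theorem measurableSet_setOf_inBZ : MeasurableSet {k : Fin d → ℝ | inBZ d k} := by
  rw [setOf_inBZ_eq_pi]
  exact MeasurableSet.univ_pi fun _ => measurableSet_Icc

theorem volume_setOf_inBZ :
    volume {k : Fin d → ℝ | inBZ d k} = ENNReal.ofReal (2 * π) ^ d := by
  rw [setOf_inBZ_eq_pi, volume_pi_pi]
  simp [Real.volume_Icc, two_mul]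

theorem volume_setOf_inBZ_ne_top : volume {k : Fin d → ℝ | inBZ d k} ≠ ⊤ := by
  rw [volume_setOf_inBZ]
  finiteness

theorem fermiSea_subset_setOf_inBZ (E : ℝ) : fermiSea d E ⊆ {k | inBZ d k} := fun _ hk => hk.1

theorem fermiSea_mono : Monotone (fermiSea d) := fun _ _ h _ hk => ⟨hk.1, hk.2.trans_le h⟩

theorem measurableSet_fermiSea (E : ℝ) : MeasurableSet (fermiSea d E) :=
  measurableSet_setOf_inBZ.inter (measurableSet_lt continuous_epsk.measurable measurable_const)

theorem volume_fermiSea_ne_top (E : ℝ) : volume (fermiSea d E) ≠ ⊤ :=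
  measure_ne_top_of_subset (fermiSea_subset_setOf_inBZ E) volume_setOf_inBZ_ne_top

theorem fermiSea_eq_empty {E : ℝ} (hE : E ≤ 0) : fermiSea d E = ∅ :=
  eq_empty_of_forall_notMem fun k hk => (hE.trans (epsk_nonneg k)).not_gt hk.2

end FermiSea

section DensityOfStates

variable {d : ℕ}

theorem idos_eq_zero {E : ℝ} (hE : E ≤ 0) : idos d E = 0 := by
  simp [idos, fermiSea_eq_empty hE]

theorem idos_four_mul (hd : 1 ≤ d) : idos d (4 * d) = 1 := by
  have hnull : volume ({k : Fin d → ℝ | inBZ d k} \ fermiSea d (4 * d)) = 0 :=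
    measure_mono_null (fun k hk => (epsk_le k).antisymm (not_lt.1 fun h => hk.2 ⟨hk.1, h⟩))
      (volume_setOf_epsk_eq hd (4 * d))
  rw [idos, measureReal_def, measure_eq_measure_of_null_sdiff (fermiSea_subset_setOf_inBZ _) hnull,
    volume_setOf_inBZ, ENNReal.toReal_pow, ENNReal.toReal_ofReal (by positivity)]
  exact div_self (by positivity)

theorem continuous_idos (hd : 1 ≤ d) : Continuous (idos d) := by
  refine continuous_iff_continuousAt.2 fun E₀ =>
    ((ENNReal.tendsto_toReal (volume_fermiSea_ne_top E₀)).comp ?_).div_const _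
  refine tendsto_measure_of_ae_tendsto_indicator _ (measurableSet_fermiSea E₀)
    measurableSet_fermiSea measurableSet_setOf_inBZ volume_setOf_inBZ_ne_top
    (Eventually.of_forall fermiSea_subset_setOf_inBZ) ?_
  -- off the null level set `{ε = E₀}`, membership in `fermiSea d E` is locally constant in `E`
  filter_upwards [measure_eq_zero_iff_ae_notMem.1 (volume_setOf_epsk_eq hd E₀)] with k hk
  rcases lt_or_gt_of_ne hk with h | h
  · filter_upwards [Ioi_mem_nhds h] with E hE
    simp [fermiSea, h, mem_Ioi.1 hE]
  · filter_upwards [Iio_mem_nhds h] with E hE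
    simp [fermiSea, h.not_gt, (mem_Iio.1 hE).not_gt]

theorem idos_strictMonoOn : StrictMonoOn (idos d) (Icc 0 (4 * d)) := by
  intro a ha b hb hab
  set U := (univ.pi fun _ : Fin d => Ioo (-π) π) ∩ epsk d ⁻¹' Ioo a b
  have hUopen : IsOpen U :=
    (isOpen_set_pi finite_univ fun _ _ => isOpen_Ioo).inter (isOpen_Ioo.preimage continuous_epsk)
  obtain ⟨k, hk, hkE⟩ := exists_epsk_eq (d := d) (E := (a + b) / 2)
    ⟨by linarith [ha.1], by linarith [hb.2]⟩
  have hkU : k ∈ U := ⟨hk, by simp only [mem_preimage, hkE, mem_Ioo]; constructor <;> linarith⟩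
  have hUsub : U ⊆ fermiSea d b \ fermiSea d a := fun k hk =>
    ⟨⟨fun i => abs_le.2 ⟨(hk.1 i trivial).1.le, (hk.1 i trivial).2.le⟩, hk.2.2⟩,
      fun h => h.2.not_gt hk.2.1⟩
  have hUfin : volume U ≠ ⊤ :=
    measure_ne_top_of_subset (hUsub.trans sdiff_subset) (volume_fermiSea_ne_top b)
  have hUpos : 0 < volume.real U :=
    ENNReal.toReal_pos (hUopen.measure_pos volume ⟨k, hkU⟩).ne' hUfin
  have hdiff : volume.real U ≤ volume.real (fermiSea d b) - volume.real (fermiSea d a) := by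
    rw [← measureReal_sdiff (fermiSea_mono hab.le) (measurableSet_fermiSea a)
      (volume_fermiSea_ne_top b)]
    exact measureReal_mono hUsub (measure_ne_top_of_subset sdiff_subset (volume_fermiSea_ne_top b))
  exact div_lt_div_of_pos_right (by linarith) (by positivity)

theorem idos_mem_Ioo {E : ℝ} (hd : 1 ≤ d) (hE : E ∈ Ioo 0 (4 * (d : ℝ))) :
    idos d E ∈ Ioo 0 1 := by
  have h4 : (0 : ℝ) ≤ 4 * d := by positivity
  constructor
  · rw [← idos_eq_zero (d := d) le_rfl]
    exact idos_strictMonoOn ⟨le_rfl, h4⟩ (Ioo_subset_Icc_self hE) hE.1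
  · rw [← idos_four_mul hd]
    exact idos_strictMonoOn (Ioo_subset_Icc_self hE) ⟨h4, le_rfl⟩ hE.2

end DensityOfStates

section FermiLevel

variable {d : ℕ} {ρ : ℝ}

theorem pos_of_le_idos (h0 : 0 < ρ) {E : ℝ} (hE : ρ ≤ idos d E) : 0 < E :=
  not_le.1 fun h => (h0.trans_le hE).ne' (idos_eq_zero h)

theorem bddBelow_setOf_le_idos (h0 : 0 < ρ) : BddBelow {E | ρ ≤ idos d E} :=
  ⟨0, fun _ hE => (pos_of_le_idos h0 hE).le⟩

theorem four_mul_mem_setOf_le_idos (hd : 1 ≤ d) (h1 : ρ ≤ 1) :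
    4 * (d : ℝ) ∈ {E | ρ ≤ idos d E} := by
  simpa [idos_four_mul hd] using h1

theorem idos_fermiLevel (hd : 1 ≤ d) (h0 : 0 < ρ) (h1 : ρ ≤ 1) : idos d (fermiLevel d ρ) = ρ := by
  have hbdd := bddBelow_setOf_le_idos (d := d) h0
  have hmem : fermiLevel d ρ ∈ {E | ρ ≤ idos d E} :=
    (isClosed_le continuous_const (continuous_idos hd)).csInf_mem
      ⟨_, four_mul_mem_setOf_le_idos hd h1⟩ hbdd
  refine le_antisymm (not_lt.1 fun hlt => ?_) hmem
  -- by continuity, `idos` already exceeds `ρ` slightly to the left of the infimum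
  obtain ⟨E, hEρ, hElt⟩ := (((continuous_idos hd).continuousAt.eventually
    (lt_mem_nhds hlt)).filter_mono nhdsWithin_le_nhds |>.and self_mem_nhdsWithin).exists
    (f := 𝓝[<] fermiLevel d ρ)
  exact (csInf_le hbdd (show ρ ≤ idos d E from hEρ.le)).not_gt hElt

theorem volume_real_fermiSea_fermiLevel (hd : 1 ≤ d) (h0 : 0 < ρ) (h1 : ρ ≤ 1) :
    volume.real (fermiSea d (fermiLevel d ρ)) = ρ * (2 * π) ^ d :=
  (div_eq_iff (by positivity)).1 (idos_fermiLevel hd h0 h1)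

theorem fermiLevel_mem_Ioo (hd : 1 ≤ d) (h0 : 0 < ρ) (h1 : ρ < 1) :
    fermiLevel d ρ ∈ Ioo 0 (4 * (d : ℝ)) := by
  have h := idos_fermiLevel hd h0 h1.le
  have hle : fermiLevel d ρ ≤ 4 * d :=
    csInf_le (bddBelow_setOf_le_idos h0) (four_mul_mem_setOf_le_idos hd h1.le)
  refine ⟨pos_of_le_idos h0 h.ge, hle.lt_of_ne fun h4 => ?_⟩
  rw [h4, idos_four_mul hd] at h
  exact h1.ne h.symm

theorem monotoneOn_fermiLevel (hd : 1 ≤ d) : MonotoneOn (fermiLevel d) (Ioc 0 1) :=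
  fun _ ha _ hb hab => csInf_le_csInf (bddBelow_setOf_le_idos ha.1)
    ⟨_, four_mul_mem_setOf_le_idos hd hb.2⟩ fun _ hE => hab.trans hE

theorem fermiLevel_idos (hd : 1 ≤ d) {E : ℝ} (hE : E ∈ Ioo 0 (4 * (d : ℝ))) :
    fermiLevel d (idos d E) = E := by
  obtain ⟨hN0, hN1⟩ := idos_mem_Ioo hd hE
  exact idos_strictMonoOn.injOn (Ioo_subset_Icc_self (fermiLevel_mem_Ioo hd hN0 hN1))
    (Ioo_subset_Icc_self hE) (idos_fermiLevel hd hN0 hN1.le)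

theorem continuousAt_fermiLevel (hd : 1 ≤ d) (hρ : ρ ∈ Ioo 0 1) :
    ContinuousAt (fermiLevel d) ρ :=
  continuousAt_of_monotoneOn_of_image_mem_nhds
    ((monotoneOn_fermiLevel hd).mono Ioo_subset_Ioc_self) (isOpen_Ioo.mem_nhds hρ)
    (mem_of_superset (isOpen_Ioo.mem_nhds (fermiLevel_mem_Ioo hd hρ.1 hρ.2))
      fun E hE => ⟨idos d E, idos_mem_Ioo hd hE, fermiLevel_idos hd hE⟩)

end FermiLevel

section GroundStateEnergy

variable {d : ℕ} {a b : ℝ}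

theorem enGS_eq (ρ : ℝ) :
    enGS d ρ = (∫ k in fermiSea d (fermiLevel d ρ), epsk d k) / (2 * π) ^ d := rfl

theorem integrableOn_epsk {s : Set (Fin d → ℝ)} (hs : volume s ≠ ⊤) : IntegrableOn (epsk d) s :=
  Measure.integrableOn_of_bounded hs continuous_epsk.aestronglyMeasurable
    (Eventually.of_forall fun k => by
      rw [Real.norm_eq_abs, abs_of_nonneg (epsk_nonneg k)]
      exact epsk_le k)

theorem enGS_sub_mem_Icc (hd : 1 ≤ d) (ha : 0 < a) (hab : a ≤ b) (hb : b ≤ 1) :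
    enGS d b - enGS d a ∈ Icc ((b - a) * fermiLevel d a) ((b - a) * fermiLevel d b) := by
  set D := fermiSea d (fermiLevel d b) \ fermiSea d (fermiLevel d a)
  have hsub : fermiSea d (fermiLevel d a) ⊆ fermiSea d (fermiLevel d b) :=
    fermiSea_mono (monotoneOn_fermiLevel hd ⟨ha, hab.trans hb⟩ ⟨ha.trans_le hab, hb⟩ hab)
  have hDmeas : MeasurableSet D := (measurableSet_fermiSea _).diff (measurableSet_fermiSea _)
  have hDfin : volume D ≠ ⊤ := measure_ne_top_of_subset sdiff_subset (volume_fermiSea_ne_top _)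
  have hvol : volume.real D = (b - a) * (2 * π) ^ d := by
    rw [measureReal_sdiff hsub (measurableSet_fermiSea _) (volume_fermiSea_ne_top _),
      volume_real_fermiSea_fermiLevel hd (ha.trans_le hab) hb,
      volume_real_fermiSea_fermiLevel hd ha (hab.trans hb)]
    ring
  have hint : enGS d b - enGS d a = (∫ k in D, epsk d k) / (2 * π) ^ d := by
    rw [setIntegral_sdiff (measurableSet_fermiSea _) (integrableOn_epsk (volume_fermiSea_ne_top _))
      hsub, enGS_eq, enGS_eq, sub_div]
  have hlow : fermiLevel d a * volume.real D ≤ ∫ k in D, epsk d k :=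
    setIntegral_ge_of_const_le_real hDmeas hDfin (fun k hk => not_lt.1 fun h => hk.2 ⟨hk.1.1, h⟩)
      (integrableOn_epsk hDfin)
  have hup : ∫ k in D, epsk d k ≤ fermiLevel d b * volume.real D := by
    rw [mul_comm, ← smul_eq_mul, ← setIntegral_const]
    exact setIntegral_mono_on (integrableOn_epsk hDfin) (integrableOn_const hDfin) hDmeas
      fun k hk => hk.1.2.le
  have h2π : (0 : ℝ) < (2 * π) ^ d := by positivity
  rw [hint]
  rw [hvol] at hlow hup
  exact ⟨(le_div_iff₀ h2π).2 (by linarith), (div_le_iff₀ h2π).2 (by linarith)⟩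

theorem slope_enGS_mem_Icc (hd : 1 ≤ d) (ha : 0 < a) (hab : a < b) (hb : b ≤ 1) :
    slope (enGS d) a b ∈ Icc (fermiLevel d a) (fermiLevel d b) := by
  obtain ⟨hlow, hup⟩ := enGS_sub_mem_Icc hd ha hab.le hb
  have hba : 0 < b - a := sub_pos.2 hab
  rw [slope_def_field]
  exact ⟨(le_div_iff₀ hba).2 (by linarith), (div_le_iff₀ hba).2 (by linarith)⟩

theorem convexOn_enGS (hd : 1 ≤ d) : ConvexOn ℝ (Ioc 0 1) (enGS d) :=
  convexOn_of_slope_mono_adjacent (convex_Ioc 0 1) fun hx hz hxy hyz => by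
    rw [← slope_def_field, ← slope_def_field]
    exact (slope_enGS_mem_Icc hd hx.1 hxy (hyz.le.trans hz.2)).2.trans
      (slope_enGS_mem_Icc hd (hx.1.trans hxy) hyz hz.2).1

theorem hasDerivAt_enGS (hd : 1 ≤ d) {ρ : ℝ} (hρ : ρ ∈ Ioo 0 1) :
    HasDerivAt (enGS d) (fermiLevel d ρ) ρ := by
  refine hasDerivAt_of_slope_mem_uIcc (continuousAt_fermiLevel hd hρ) ?_
  filter_upwards [nhdsWithin_le_nhds (isOpen_Ioo.mem_nhds hρ), self_mem_nhdsWithin] with r hr hne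
  rcases lt_or_gt_of_ne hne with h | h
  · rw [slope_comm]
    exact Icc_subset_uIcc' (slope_enGS_mem_Icc hd hr.1 h hρ.2.le)
  · exact Icc_subset_uIcc (slope_enGS_mem_Icc hd hρ.1 h hr.2.le)

end GroundStateEnergy

theorem convexity_of_diluted_energy_general (d : ℕ) (hd : 1 ≤ d) (ρ : ℝ)
    (h0 : 0 < ρ) :
    ConvexOn ℝ (Set.Icc 0 (1 - ρ)) (fun α => (1 - α) * enGS d (ρ / (1 - α))) ∧
    (∀ α ∈ Set.Ioo (0 : ℝ) (1 - ρ),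
      HasDerivAt (fun α => (1 - α) * enGS d (ρ / (1 - α))) (xiFun d (ρ / (1 - α))) α) ∧
    (∀ α ∈ Set.Icc (0 : ℝ) (1 - ρ),
      (1 - α) * enGS d (ρ / (1 - α)) ≥ enGS d ρ + α * xiFun d ρ) := by
  have hdom : ∀ α ∈ Icc 0 (1 - ρ), α < 1 ∧ ρ / (1 - α) ∈ Ioc 0 1 := fun α hα => by
    have h1α : 0 < 1 - α := by linarith [hα.2]
    exact ⟨by linarith, div_pos h0 h1α, (div_le_one h1α).2 (by linarith [hα.2])⟩
  refine ⟨(convexOn_enGS hd).one_sub_mul_comp_div ρ (convex_Icc _ _) hdom, fun α hα => ?_,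
    fun α hα => ?_⟩
  · have h1α : 0 < 1 - α := by linarith [hα.2]
    have hr : ρ / (1 - α) ∈ Ioo 0 1 := ⟨div_pos h0 h1α, (div_lt_one h1α).2 (by linarith [hα.2])⟩
    exact hasDerivAt_one_sub_mul_comp_div (by linarith) (hasDerivAt_enGS hd hr)
  · obtain ⟨hα1, -, hr1⟩ := hdom α hα
    have h1α : 0 < 1 - α := by linarith
    have hsupport := (enGS_sub_mem_Icc hd h0 (le_div_self h0.le h1α (by linarith [hα.1])) hr1).1
    have hscale : (1 - α) * ((ρ / (1 - α) - ρ) * fermiLevel d ρ) = α * ρ * fermiLevel d ρ := by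
      rw [← mul_assoc, mul_sub, mul_div_cancel₀ _ h1α.ne']
      ring
    unfold xiFun
    linear_combination mul_le_mul_of_nonneg_left hsupport h1α.le - hscale

/-- For `d ≥ 1` and `ρ ∈ (0,1)`, the function `g(α) = (1−α)·e(ρ/(1−α))` is convex on
`[0, 1−ρ]`, differentiable on the interior with derivative `g′(α) = ξ(ρ/(1−α))`, and
satisfies `g(α) ≥ e(ρ) + α·ξ(ρ)` on `[0, 1−ρ]`. -/
theorem convexity_of_diluted_energy (d : ℕ) (hd : 1 ≤ d) (ρ : ℝ)
    (h0 : 0 < ρ) (h1 : ρ < 1) :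
    ConvexOn ℝ (Set.Icc 0 (1 - ρ)) (fun α => (1 - α) * enGS d (ρ / (1 - α))) ∧
    (∀ α ∈ Set.Ioo (0 : ℝ) (1 - ρ),
      HasDerivAt (fun α => (1 - α) * enGS d (ρ / (1 - α))) (xiFun d (ρ / (1 - α))) α) ∧
    (∀ α ∈ Set.Icc (0 : ℝ) (1 - ρ),
      (1 - α) * enGS d (ρ / (1 - α)) ≥ enGS d ρ + α * xiFun d ρ) :=
  convexity_of_diluted_energy_general d hd ρ h0

end
end
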